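/- arXiv:2503.11804 — 3 statements merged into one kernel-verified Lean document; each statement's English description precedes it below -/
import Mathlib

section
/- Let t₀ > 0 and k > 0 be real numbers and let h : ℝ → ℝ be continuous on [0, t₀). If v : (0, t₀) → ℝ is differentiable with v′(t) = −(k/t)·v(t) + h(t) for all t ∈ (0, t₀), and v is bounded on (0, δ) for some 0 < δ ≤ t₀, then v(t) = t^(−k) · ∫₀ᵗ sᵏ h(s) ds for all t ∈ (0, t₀); in particular any two solutions that are bounded near t = 0 coincide. -/
open MeasureTheory intervalIntegral Set Filter Topology

/-! Multiplying by the integrating factor `tᵏ` turns the equation into `(tᵏ v)′ = tᵏ h`.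
Since `k > 0` and `v` is bounded near `0`, `tᵏ v(t) → 0` as `t → 0⁺`, so the fundamental theorem
of calculus on `(0, t)` gives `tᵏ v(t) = ∫₀ᵗ sᵏ h(s) ds`. -/

lemma HasDerivAt.rpow_mul_of_fuchsian {k t a : ℝ} {v : ℝ → ℝ} (ht : 0 < t)
    (hv : HasDerivAt v (-(k / t) * v t + a) t) :
    HasDerivAt (fun s => s ^ k * v s) (t ^ k * a) t := by
  refine ((Real.hasDerivAt_rpow_const (p := k) (Or.inl ht.ne')).mul hv).congr_deriv ?_
  rw [Real.rpow_sub ht, Real.rpow_one]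
  field_simp
  ring

lemma isBoundedUnder_nhdsGT_of_abs_le {v : ℝ → ℝ} {δ C : ℝ} (hδ : 0 < δ)
    (hC : ∀ t ∈ Ioo 0 δ, |v t| ≤ C) :
    IsBoundedUnder (· ≤ ·) (𝓝[>] 0) (norm ∘ v) :=
  isBoundedUnder_of_eventually_le (a := C) <|
    eventually_of_mem (Ioo_mem_nhdsGT hδ) hC

lemma tendsto_rpow_mul_nhdsGT_zero {k : ℝ} {v : ℝ → ℝ} (hk : 0 < k)
    (hbdd : IsBoundedUnder (· ≤ ·) (𝓝[>] 0) (norm ∘ v)) :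
    Tendsto (fun t => t ^ k * v t) (𝓝[>] 0) (𝓝 0) := by
  have hpow : Tendsto (fun t : ℝ => t ^ k) (𝓝[>] 0) (𝓝 0) := by
    simpa [Real.zero_rpow hk.ne'] using
      ((Real.continuous_rpow_const hk.le).tendsto 0).mono_left nhdsWithin_le_nhds
  exact hpow.zero_mul_isBoundedUnder_le hbdd

theorem fuchsian_solution_eq_rpow_neg_mul_integral {t₀ k : ℝ} {h v : ℝ → ℝ} (hk : 0 < k)
    (hcont : ContinuousOn h (Ico 0 t₀))
    (hv : ∀ t ∈ Ioo 0 t₀, HasDerivAt v (-(k / t) * v t + h t) t)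
    (hbdd : IsBoundedUnder (· ≤ ·) (𝓝[>] 0) (norm ∘ v)) {t : ℝ} (ht : t ∈ Ioo 0 t₀) :
    v t = t ^ (-k) * ∫ s in (0 : ℝ)..t, s ^ k * h s := by
  have hderiv : ∀ s ∈ Ioo 0 t₀, HasDerivAt (fun s => s ^ k * v s) (s ^ k * h s) s :=
    fun s hs => (hv s hs).rpow_mul_of_fuchsian hs.1
  have hint : IntervalIntegrable (fun s => s ^ k * h s) volume 0 t := by
    refine ((Real.continuous_rpow_const hk.le).continuousOn.mul
      (hcont.mono ?_)).intervalIntegrable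
    rw [uIcc_of_le ht.1.le]
    exact Icc_subset_Ico_right ht.2
  have hleft := tendsto_rpow_mul_nhdsGT_zero hk hbdd
  have hright := (hderiv t ht).continuousAt.tendsto.mono_left (nhdsWithin_le_nhds (s := Iio t))
  have key : ∫ s in (0 : ℝ)..t, s ^ k * h s = t ^ k * v t := by
    rw [integral_eq_sub_of_hasDerivAt_of_tendsto ht.1
      (fun s hs => hderiv s ⟨hs.1, hs.2.trans ht.2⟩) hint hleft hright, sub_zero]
  rw [key, Real.rpow_neg ht.1.le, inv_mul_cancel_left₀ (Real.rpow_pos_of_pos ht.1 k).ne']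

theorem stmt_1_general (t₀ k : ℝ) (hk : 0 < k) (h : ℝ → ℝ)
    (hcont : ContinuousOn h (Set.Ico 0 t₀)) (v : ℝ → ℝ)
    (hv : ∀ t ∈ Set.Ioo (0 : ℝ) t₀, HasDerivAt v (-(k / t) * v t + h t) t)
    (δ : ℝ) (hδ0 : 0 < δ)
    (hbdd : ∃ C : ℝ, ∀ t ∈ Set.Ioo (0 : ℝ) δ, |v t| ≤ C) :
    (∀ t ∈ Set.Ioo (0 : ℝ) t₀, v t = t ^ (-k) * ∫ s in (0 : ℝ)..t, s ^ k * h s)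
    ∧ ∀ v₂ : ℝ → ℝ,
        (∀ t ∈ Set.Ioo (0 : ℝ) t₀, HasDerivAt v₂ (-(k / t) * v₂ t + h t) t) →
        (∃ δ₂ : ℝ, 0 < δ₂ ∧ δ₂ ≤ t₀ ∧ ∃ C : ℝ, ∀ t ∈ Set.Ioo (0 : ℝ) δ₂, |v₂ t| ≤ C) →
        ∀ t ∈ Set.Ioo (0 : ℝ) t₀, v t = v₂ t := by
  obtain ⟨C, hC⟩ := hbdd
  have hsol : ∀ t ∈ Set.Ioo (0 : ℝ) t₀, v t = t ^ (-k) * ∫ s in (0 : ℝ)..t, s ^ k * h s :=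
    fun _ => fuchsian_solution_eq_rpow_neg_mul_integral hk hcont hv
      (isBoundedUnder_nhdsGT_of_abs_le hδ0 hC)
  refine ⟨hsol, ?_⟩
  rintro v₂ hv₂ ⟨δ₂, hδ₂0, -, C₂, hC₂⟩ t ht
  rw [hsol t ht, fuchsian_solution_eq_rpow_neg_mul_integral hk hcont hv₂
    (isBoundedUnder_nhdsGT_of_abs_le hδ₂0 hC₂) ht]

/-- Uniqueness of bounded solutions of the Fuchsian ODE
`v′(t) = −(k/t)·v(t) + h(t)` on `(0, t₀)` for `k > 0`: any solution that is bounded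
near `t = 0` equals `t^(−k) · ∫₀ᵗ sᵏ h(s) ds`; in particular any two solutions
which are bounded near `t = 0` coincide. -/
theorem stmt_1 (t₀ k : ℝ) (ht₀ : 0 < t₀) (hk : 0 < k) (h : ℝ → ℝ)
    (hcont : ContinuousOn h (Set.Ico 0 t₀)) (v : ℝ → ℝ)
    (hv : ∀ t ∈ Set.Ioo (0 : ℝ) t₀, HasDerivAt v (-(k / t) * v t + h t) t)
    (δ : ℝ) (hδ0 : 0 < δ) (hδ : δ ≤ t₀)
    (hbdd : ∃ C : ℝ, ∀ t ∈ Set.Ioo (0 : ℝ) δ, |v t| ≤ C) :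
    (∀ t ∈ Set.Ioo (0 : ℝ) t₀, v t = t ^ (-k) * ∫ s in (0 : ℝ)..t, s ^ k * h s)
    ∧ ∀ v₂ : ℝ → ℝ,
        (∀ t ∈ Set.Ioo (0 : ℝ) t₀, HasDerivAt v₂ (-(k / t) * v₂ t + h t) t) →
        (∃ δ₂ : ℝ, 0 < δ₂ ∧ δ₂ ≤ t₀ ∧ ∃ C : ℝ, ∀ t ∈ Set.Ioo (0 : ℝ) δ₂, |v₂ t| ≤ C) →
        ∀ t ∈ Set.Ioo (0 : ℝ) t₀, v t = v₂ t :=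
  stmt_1_general t₀ k hk h hcont v hv δ hδ0 hbdd
end

section
/- Let t₀ > 0 and k ≥ 0 be real numbers and let h : ℝ → ℝ be infinitely differentiable on [0, t₀) (smooth on the half-open interval, i.e. ContDiffOn of every order on Ico 0 t₀). Then the function u(t) := ∫₀¹ τᵏ h(t·τ) dτ is infinitely differentiable on [0, t₀), and therefore the extension of w(t) = t^(−k) · ∫₀ᵗ sᵏ h(s) ds by w(0) := 0, which equals t·u(t), is infinitely differentiable on [0, t₀) as well. -/
open MeasureTheory intervalIntegral Set Filter Topology

open FormalMultilinearSeries
open scoped ENNReal NNReal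

lemma wident {t₀ k : ℝ} (ht₀ : 0 < t₀) (hk : 0 ≤ k) (h : ℝ → ℝ) :
    ∀ t ∈ Set.Ico (0 : ℝ) t₀,
      (if t = 0 then 0 else t ^ (-k) * ∫ s in (0 : ℝ)..t, s ^ k * h s)
        = t * ∫ τ in (0 : ℝ)..1, τ ^ k * h (t * τ) := by
  intro t ht
  by_cases ht0 : t = 0
  · subst ht0; simp
  · rw [if_neg ht0]
    have htpos : 0 < t := lt_of_le_of_ne ht.1 (Ne.symm ht0)
    have htk : (0:ℝ) < t ^ k := Real.rpow_pos_of_pos htpos k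
    have heq1 : ∀ τ ∈ Set.uIcc (0:ℝ) 1,
        τ ^ k * h (t * τ) = t ^ (-k) * ((t * τ) ^ k * h (t * τ)) := by
      intro τ hτ
      rw [Set.uIcc_of_le zero_le_one] at hτ
      rw [Real.mul_rpow htpos.le hτ.1, Real.rpow_neg htpos.le]
      field_simp
    have h2 : (∫ τ in (0:ℝ)..1, τ ^ k * h (t * τ))
        = t ^ (-k) * ∫ τ in (0:ℝ)..1, (t * τ) ^ k * h (t * τ) := by
      rw [intervalIntegral.integral_congr heq1]
      exact intervalIntegral.integral_const_mul _ _
    have h3 : (∫ τ in (0:ℝ)..1, (t * τ) ^ k * h (t * τ))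
        = t⁻¹ * ∫ s in (0:ℝ)..t, s ^ k * h s := by
      have := intervalIntegral.integral_comp_mul_left (a := (0:ℝ)) (b := 1)
        (f := fun s => s ^ k * h s) (c := t) ht0
      simpa [smul_eq_mul] using this
    rw [h2, h3]
    field_simp

lemma ext_hasDerivAt {t₀ : ℝ} {g : ℝ → ℝ} (hg : ContDiffOn ℝ 1 g (Set.Ico 0 t₀)) (ht₀ : 0 < t₀)
    {s : ℝ} (hs : s < t₀) :
    HasDerivAt (fun s => g (max s 0) + min s 0 * derivWithin g (Set.Ico 0 t₀) 0)
      (derivWithin g (Set.Ico 0 t₀) (max s 0)) s := by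
  have hdiff : DifferentiableOn ℝ g (Set.Ico 0 t₀) := hg.differentiableOn one_ne_zero
  have haff : ∀ y : ℝ, HasDerivAt (fun s => g 0 + s * derivWithin g (Set.Ico 0 t₀) 0)
      (derivWithin g (Set.Ico 0 t₀) 0) y := by
    intro y
    have := ((hasDerivAt_id y).mul_const (derivWithin g (Set.Ico 0 t₀) 0)).const_add (g 0)
    simpa using this
  rcases lt_trichotomy s 0 with hs0 | hs0 | hs0
  · rw [max_eq_right hs0.le]
    apply (haff s).congr_of_eventuallyEq
    filter_upwards [Iio_mem_nhds hs0] with y hy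
    have hy' : y ≤ 0 := le_of_lt (Set.mem_Iio.mp hy)
    simp [max_eq_right hy', min_eq_left hy']
  · subst hs0
    have hr : HasDerivWithinAt g (derivWithin g (Set.Ico 0 t₀) 0) (Set.Ici 0) 0 :=
      ((hdiff 0 ⟨le_rfl, ht₀⟩).hasDerivWithinAt).mono_of_mem_nhdsWithin (Ico_mem_nhdsGE ht₀)
    have hr' : HasDerivWithinAt (fun s => g (max s 0) + min s 0 * derivWithin g (Set.Ico 0 t₀) 0)
        (derivWithin g (Set.Ico 0 t₀) 0) (Set.Ici 0) 0 :=
      hr.congr (fun y hy => by simp [max_eq_left (show (0:ℝ) ≤ y from hy),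
        min_eq_right (show (0:ℝ) ≤ y from hy)]) (by simp)
    have hl : HasDerivWithinAt (fun s => g (max s 0) + min s 0 * derivWithin g (Set.Ico 0 t₀) 0)
        (derivWithin g (Set.Ico 0 t₀) 0) (Set.Iic 0) 0 :=
      (haff 0).hasDerivWithinAt.congr (fun y hy => by
        simp [max_eq_right (show y ≤ (0:ℝ) from hy), min_eq_left (show y ≤ (0:ℝ) from hy)])
        (by simp)
    have := hl.union hr'
    rw [Set.Iic_union_Ici, hasDerivWithinAt_univ] at this
    simpa using this
  · rw [max_eq_left hs0.le]
    have hd : HasDerivAt g (derivWithin g (Set.Ico 0 t₀) s) s :=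
      ((hdiff s ⟨hs0.le, hs⟩).hasDerivWithinAt).hasDerivAt (Ico_mem_nhds hs0 hs)
    apply hd.congr_of_eventuallyEq
    filter_upwards [Ioi_mem_nhds hs0] with y hy
    have hy' : 0 ≤ y := le_of_lt (Set.mem_Ioi.mp hy)
    simp [max_eq_left hy', min_eq_right hy']

lemma mul_lt_of_unit {x y τ : ℝ} (hy : 0 < y) (hx : x < y) (hτ : τ ∈ Set.Icc (0:ℝ) 1) :
    x * τ < y := by
  rcases le_or_gt x 0 with h | h
  · nlinarith [hτ.1]
  · nlinarith [hτ.2]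

lemma U_hasDerivWithinAt {t₀ k : ℝ} (ht₀ : 0 < t₀) (hk : 0 ≤ k) {g : ℝ → ℝ}
    (hg : ContDiffOn ℝ 1 g (Set.Ico 0 t₀)) {x₀ : ℝ} (hx : x₀ ∈ Set.Ico 0 t₀) :
    HasDerivWithinAt (fun t : ℝ => ∫ τ in (0 : ℝ)..1, τ ^ k * g (t * τ))
      (∫ τ in (0 : ℝ)..1, τ ^ (k+1) * derivWithin g (Set.Ico 0 t₀) (x₀ * τ)) (Set.Ico 0 t₀) x₀ := by
  have hg' : ContinuousOn (derivWithin g (Set.Ico 0 t₀)) (Set.Ico 0 t₀) :=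
    hg.continuousOn_derivWithin (uniqueDiffOn_Ico 0 t₀) le_rfl
  set g' := derivWithin g (Set.Ico 0 t₀) with hg'def
  set G : ℝ → ℝ := fun s => g (max s 0) + min s 0 * g' 0 with hG
  set G' : ℝ → ℝ := fun s => g' (max s 0) with hG'
  have hGd : ∀ s < t₀, HasDerivAt G (G' s) s := fun s hs => ext_hasDerivAt hg ht₀ hs
  have hmax : Set.MapsTo (fun s : ℝ => max s 0) (Set.Iio t₀) (Set.Ico 0 t₀) :=
    fun s hs => ⟨le_max_right _ _, max_lt hs ht₀⟩
  have hGc : ContinuousOn G (Set.Iio t₀) :=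
    (hg.continuousOn.comp (continuous_id.max continuous_const).continuousOn hmax).add
      ((continuous_id.min continuous_const).mul continuous_const).continuousOn
  have hG'c : ContinuousOn G' (Set.Iio t₀) :=
    hg'.comp (continuous_id.max continuous_const).continuousOn hmax
  have hrpow : Continuous (fun τ : ℝ => τ ^ k) := Real.continuous_rpow_const hk
  set δ := (t₀ - x₀) / 2 with hδ
  have hδ0 : 0 < δ := by have := hx.2; simp only [hδ]; linarith
  set c := x₀ + δ with hc
  have hct : c < t₀ := by have := hx.2; simp only [hc, hδ]; linarith
  have hc0 : 0 < c := by have := hx.1; simp only [hc]; linarith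
  obtain ⟨C, hC⟩ := (isCompact_Icc (a := (0:ℝ)) (b := c)).exists_bound_of_continuousOn
    (hg'.mono (Set.Icc_subset_Ico_right hct))
  set C' := max C 0 with hC'
  have hC'0 : 0 ≤ C' := le_max_right _ _
  have hball : ∀ x ∈ Metric.ball x₀ δ, x < c := by
    intro x hx'
    rw [Metric.mem_ball, Real.dist_eq] at hx'
    have := (abs_lt.mp hx').2
    simp only [hc]; linarith
  have huIoc : Set.uIoc (0:ℝ) 1 = Set.Ioc (0:ℝ) 1 := Set.uIoc_of_le zero_le_one
  have hFc : ∀ x < t₀, ContinuousOn (fun τ : ℝ => τ ^ k * G (x * τ)) (Set.Icc 0 1) := by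
    intro x hx'
    exact hrpow.continuousOn.mul (hGc.comp (continuous_const.mul continuous_id).continuousOn
      (fun τ hτ => mul_lt_of_unit ht₀ hx' hτ))
  have key := intervalIntegral.hasDerivAt_integral_of_dominated_loc_of_deriv_le
    (F := fun x (τ : ℝ) => τ ^ k * G (x * τ))
    (F' := fun x (τ : ℝ) => τ ^ k * (G' (x * τ) * τ))
    (x₀ := x₀) (a := 0) (b := 1) (μ := MeasureTheory.volume) (bound := fun _ => C')
    (Metric.ball_mem_nhds x₀ hδ0) ?_ ?_ ?_ ?_ ?_ ?_
  · have hfun : ∀ t ∈ Set.Ico (0:ℝ) t₀,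
        (∫ τ in (0:ℝ)..1, τ ^ k * g (t * τ)) = ∫ τ in (0:ℝ)..1, τ ^ k * G (t * τ) := by
      intro t ht
      apply intervalIntegral.integral_congr
      intro τ hτ
      rw [Set.uIcc_of_le zero_le_one] at hτ
      have h0 : 0 ≤ t * τ := mul_nonneg ht.1 hτ.1
      simp only [hG, max_eq_left h0, min_eq_right h0, zero_mul, add_zero]
    have hval : (∫ τ in (0:ℝ)..1, τ ^ k * (G' (x₀ * τ) * τ))
        = ∫ τ in (0:ℝ)..1, τ ^ (k+1) * g' (x₀ * τ) := by
      apply intervalIntegral.integral_congr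
      intro τ hτ
      rw [Set.uIcc_of_le zero_le_one] at hτ
      have h0 : 0 ≤ x₀ * τ := mul_nonneg hx.1 hτ.1
      simp only [hG', max_eq_left h0]
      rw [Real.rpow_add' hτ.1 (by linarith), Real.rpow_one]
      ring
    have := key.2.hasDerivWithinAt (s := Set.Ico 0 t₀)
    rw [hval] at this
    exact this.congr hfun (hfun x₀ hx)
  · filter_upwards [Metric.ball_mem_nhds x₀ hδ0] with x hx'
    exact ((hFc x (lt_trans (hball x hx') hct)).mono
      (by rw [huIoc]; exact Set.Ioc_subset_Icc_self)).aestronglyMeasurable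
      (by rw [huIoc]; exact measurableSet_Ioc)
  · apply ContinuousOn.intervalIntegrable
    rw [Set.uIcc_of_le zero_le_one]
    exact hFc x₀ hx.2
  · have : ContinuousOn (fun τ : ℝ => τ ^ k * (G' (x₀ * τ) * τ)) (Set.Icc 0 1) :=
      hrpow.continuousOn.mul ((hG'c.comp (continuous_const.mul continuous_id).continuousOn
        (fun τ hτ => mul_lt_of_unit ht₀ hx.2 hτ)).mul continuous_id.continuousOn)
    exact (this.mono (by rw [huIoc]; exact Set.Ioc_subset_Icc_self)).aestronglyMeasurable
      (by rw [huIoc]; exact measurableSet_Ioc)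
  · apply MeasureTheory.ae_of_all
    intro τ hτ x hx'
    rw [huIoc] at hτ
    have hτ' : τ ∈ Set.Icc (0:ℝ) 1 := Set.Ioc_subset_Icc_self hτ
    have hm : max (x * τ) 0 ∈ Set.Icc (0:ℝ) c :=
      ⟨le_max_right _ _, max_le (mul_lt_of_unit hc0 (hball x hx') hτ').le hc0.le⟩
    have h1 : ‖τ ^ k‖ = τ ^ k := by
      rw [Real.norm_eq_abs, abs_of_nonneg (Real.rpow_nonneg hτ'.1 k)]
    have h2 : τ ^ k ≤ 1 := Real.rpow_le_one hτ'.1 hτ'.2 hk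
    have h3 : ‖τ‖ = τ := by
      rw [Real.norm_eq_abs, abs_of_nonneg hτ'.1]
    rw [norm_mul, norm_mul, h1, h3]
    have h4 : ‖G' (x * τ)‖ ≤ C' := le_trans (hC _ hm) (le_max_left _ _)
    have h5 : 0 ≤ ‖G' (x * τ)‖ := norm_nonneg _
    have hfin : τ ^ k * (‖G' (x * τ)‖ * τ) ≤ 1 * (C' * 1) :=
      mul_le_mul h2 (mul_le_mul h4 hτ'.2 hτ'.1 hC'0) (mul_nonneg h5 hτ'.1) zero_le_one
    simpa using hfin
  · exact intervalIntegrable_const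
  · apply MeasureTheory.ae_of_all
    intro τ hτ x hx'
    rw [huIoc] at hτ
    have hτ' : τ ∈ Set.Icc (0:ℝ) 1 := Set.Ioc_subset_Icc_self hτ
    have hdG := hGd (x * τ) (mul_lt_of_unit ht₀ (lt_trans (hball x hx') hct) hτ')
    have h1 : HasDerivAt (fun w : ℝ => w * τ) τ x := hasDerivAt_mul_const _
    exact (hdG.comp x h1).const_mul (τ ^ k)

lemma U_contDiffOn {t₀ : ℝ} (ht₀ : 0 < t₀) (n : ℕ) : ∀ (k : ℝ), 0 ≤ k → ∀ g : ℝ → ℝ,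
    ContDiffOn ℝ (⊤ : ℕ∞) g (Set.Ico 0 t₀) →
    ContDiffOn ℝ n (fun t : ℝ => ∫ τ in (0 : ℝ)..1, τ ^ k * g (t * τ)) (Set.Ico 0 t₀) := by
  have hD : ∀ k : ℝ, 0 ≤ k → ∀ g : ℝ → ℝ, ContDiffOn ℝ (⊤ : ℕ∞) g (Set.Ico 0 t₀) →
      DifferentiableOn ℝ (fun t : ℝ => ∫ τ in (0 : ℝ)..1, τ ^ k * g (t * τ)) (Set.Ico 0 t₀) :=
    fun k hk g hg x hx =>
      (U_hasDerivWithinAt ht₀ hk (hg.of_le (by exact_mod_cast le_top)) hx).differentiableWithinAt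
  induction n with
  | zero =>
    intro k hk g hg
    rw [Nat.cast_zero, contDiffOn_zero]
    exact (hD k hk g hg).continuousOn
  | succ n ih =>
    intro k hk g hg
    rw [Nat.cast_succ, contDiffOn_succ_iff_derivWithin (uniqueDiffOn_Ico 0 t₀)]
    refine ⟨hD k hk g hg, fun hn => absurd hn (by simp), ?_⟩
    have hg2 : ContDiffOn ℝ (⊤ : ℕ∞) (derivWithin g (Set.Ico 0 t₀)) (Set.Ico 0 t₀) :=
      ((contDiffOn_infty_iff_derivWithin (uniqueDiffOn_Ico 0 t₀)).1 hg).2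
    have := ih (k + 1) (by linarith) _ hg2
    exact this.congr fun t ht =>
      (U_hasDerivWithinAt ht₀ hk (hg.of_le (by exact_mod_cast le_top)) ht).derivWithin
        (uniqueDiffOn_Ico 0 t₀ t ht)

/-- If `h` is infinitely differentiable on `[0, t₀)`, then
`u(t) := ∫₀¹ τᵏ h(t·τ) dτ` is infinitely differentiable on `[0, t₀)`, and therefore
the extension of `w(t) = t^(−k) · ∫₀ᵗ sᵏ h(s) ds` by `w(0) := 0`, which equals
`t·u(t)` on `[0, t₀)`, is infinitely differentiable on `[0, t₀)` as well. -/
theorem stmt_4 (t₀ k : ℝ) (ht₀ : 0 < t₀) (hk : 0 ≤ k) (h : ℝ → ℝ)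
    (hsmooth : ContDiffOn ℝ (⊤ : ℕ∞) h (Set.Ico 0 t₀)) :
    ContDiffOn ℝ (⊤ : ℕ∞) (fun t : ℝ => ∫ τ in (0 : ℝ)..1, τ ^ k * h (t * τ)) (Set.Ico 0 t₀)
    ∧ (∀ t ∈ Set.Ico (0 : ℝ) t₀,
        (if t = 0 then 0 else t ^ (-k) * ∫ s in (0 : ℝ)..t, s ^ k * h s)
          = t * ∫ τ in (0 : ℝ)..1, τ ^ k * h (t * τ))
    ∧ ContDiffOn ℝ (⊤ : ℕ∞)
        (fun t : ℝ => if t = 0 then 0 else t ^ (-k) * ∫ s in (0 : ℝ)..t, s ^ k * h s)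
        (Set.Ico 0 t₀) := by
  have huC : ContDiffOn ℝ (⊤ : ℕ∞) (fun t : ℝ => ∫ τ in (0 : ℝ)..1, τ ^ k * h (t * τ))
      (Set.Ico 0 t₀) :=
    contDiffOn_infty.mpr fun n => U_contDiffOn ht₀ n k hk h hsmooth
  have hid := wident ht₀ hk h
  refine ⟨huC, hid, ?_⟩
  have hmul : ContDiffOn ℝ (⊤ : ℕ∞)
      (fun t : ℝ => t * ∫ τ in (0 : ℝ)..1, τ ^ k * h (t * τ)) (Set.Ico 0 t₀) :=
    ContDiffOn.mul contDiffOn_id huC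
  exact hmul.congr fun t ht => hid t ht
end

section
/- Let t₀ > 0 and k ≥ 0 be real numbers and let h : ℝ → ℝ be continuous on [0, t₀). With w(t) = t^(−k) · ∫₀ᵗ sᵏ h(s) ds for t ∈ (0, t₀), the derivative w′(t) = −(k/t)·w(t) + h(t) converges to h(0)/(k+1) as t → 0⁺; in particular the right-hand side of the Fuchsian equation extends continuously to t = 0. -/
open MeasureTheory intervalIntegral Set Filter Topology

/-! By L'Hôpital's rule, `t^(-(k+1)) ∫₀ᵗ sᵏ h(s) ds` has the same limit at `0⁺` as
`tᵏ h(t) / ((k+1) tᵏ) = h(t)/(k+1)`, namely `h(0)/(k+1)`. Since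
`w′(t) = -k · t^(-(k+1)) ∫₀ᵗ sᵏ h(s) ds + h(t)`, it tends to
`-k h(0)/(k+1) + h(0) = h(0)/(k+1)`. -/

section WeightedPrimitive

variable {k t₀ : ℝ} {h : ℝ → ℝ}

lemma tendsto_nhdsGT_of_continuousOn_Ico (ht₀ : 0 < t₀) (hh : ContinuousOn h (Ico 0 t₀)) :
    Tendsto h (𝓝[>] 0) (𝓝 (h 0)) :=
  (hh.continuousWithinAt ⟨le_rfl, ht₀⟩).mono_of_mem_nhdsWithin (Ico_mem_nhdsGT ht₀)

lemma intervalIntegrable_rpow_mul (hk : -1 < k) (hh : ContinuousOn h (Ico 0 t₀))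
    {t : ℝ} (ht : t ∈ Ico 0 t₀) : IntervalIntegrable (fun s => s ^ k * h s) volume 0 t :=
  (intervalIntegrable_rpow' hk).mul_continuousOn <| hh.mono <| by
    rw [uIcc_of_le ht.1]
    exact Icc_subset_Ico_right ht.2

lemma hasDerivAt_integral_rpow_mul (hk : -1 < k) (hh : ContinuousOn h (Ico 0 t₀))
    {t : ℝ} (ht : t ∈ Ioo 0 t₀) :
    HasDerivAt (fun u => ∫ s in (0 : ℝ)..u, s ^ k * h s) (t ^ k * h t) t := by
  have hpow : ContinuousOn (fun s : ℝ => s ^ k) (Ioo 0 t₀) := fun s hs =>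
    (Real.continuousAt_rpow_const s k (Or.inl hs.1.ne')).continuousWithinAt
  have hcont : ContinuousOn (fun s => s ^ k * h s) (Ioo 0 t₀) :=
    hpow.mul (hh.mono Ioo_subset_Ico_self)
  exact integral_hasDerivAt_right (intervalIntegrable_rpow_mul hk hh (Ioo_subset_Ico_self ht))
    (hcont.stronglyMeasurableAtFilter isOpen_Ioo t ht) (hcont.continuousAt (isOpen_Ioo.mem_nhds ht))

lemma tendsto_integral_rpow_mul_div_rpow (hk : -1 < k) (ht₀ : 0 < t₀)
    (hh : ContinuousOn h (Ico 0 t₀)) :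
    Tendsto (fun t => (∫ s in (0 : ℝ)..t, s ^ k * h s) / t ^ (k + 1)) (𝓝[>] 0)
      (𝓝 (h 0 / (k + 1))) := by
  have hk1 : 0 < k + 1 := by linarith
  have hprim : Tendsto (fun t => ∫ s in (0 : ℝ)..t, s ^ k * h s) (𝓝[>] 0) (𝓝 0) := by
    have hint := intervalIntegrable_rpow_mul hk hh ⟨(half_pos ht₀).le, half_lt_self ht₀⟩
    have hprim_cont := continuousOn_primitive_interval' hint left_mem_uIcc
    rw [uIcc_of_le (half_pos ht₀).le] at hprim_cont
    simpa using ((hprim_cont 0 (left_mem_Icc.2 (half_pos ht₀).le)).mono_of_mem_nhdsWithin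
      (Icc_mem_nhdsGT (half_pos ht₀))).tendsto
  have hpow : Tendsto (fun t : ℝ => t ^ (k + 1)) (𝓝[>] 0) (𝓝 0) := by
    have := (Real.continuousAt_rpow_const 0 (k + 1) (Or.inr hk1.le)).tendsto
    rw [Real.zero_rpow hk1.ne'] at this
    exact this.mono_left nhdsWithin_le_nhds
  refine HasDerivAt.lhopital_zero_right_on_Ioo ht₀
    (fun t ht => hasDerivAt_integral_rpow_mul hk hh ht)
    (fun t ht => Real.hasDerivAt_rpow_const (Or.inl ht.1.ne')) (fun t ht => ?_) hprim hpow ?_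
  · exact mul_ne_zero hk1.ne' (Real.rpow_pos_of_pos ht.1 _).ne'
  · refine ((tendsto_nhdsGT_of_continuousOn_Ico ht₀ hh).div_const (k + 1)).congr' ?_
    filter_upwards [self_mem_nhdsWithin] with t (ht : 0 < t)
    rw [add_sub_cancel_right]
    field_simp [(Real.rpow_pos_of_pos ht k).ne']

end WeightedPrimitive

/-- With `w(t) = t^(−k) · ∫₀ᵗ sᵏ h(s) ds` on `(0, t₀)`, the derivative
`w′(t) = −(k/t)·w(t) + h(t)` converges to `h(0)/(k+1)` as `t → 0⁺`; in particular
the right-hand side of the Fuchsian equation extends continuously to `t = 0`. -/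
theorem stmt_5 (t₀ k : ℝ) (ht₀ : 0 < t₀) (hk : 0 ≤ k) (h : ℝ → ℝ)
    (hcont : ContinuousOn h (Set.Ico 0 t₀)) :
    Filter.Tendsto
      (fun t : ℝ => -(k / t) * (t ^ (-k) * ∫ s in (0 : ℝ)..t, s ^ k * h s) + h t)
      (𝓝[>] 0) (𝓝 (h 0 / (k + 1))) := by
  have hk1 : k + 1 ≠ 0 := by linarith
  have hmean := tendsto_integral_rpow_mul_div_rpow (by linarith) ht₀ hcont
  have hlim : -k * (h 0 / (k + 1)) + h 0 = h 0 / (k + 1) := by field_simp; ring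
  rw [← hlim]
  refine ((hmean.const_mul (-k)).add (tendsto_nhdsGT_of_continuousOn_Ico ht₀ hcont)).congr' ?_
  filter_upwards [self_mem_nhdsWithin] with t (ht : 0 < t)
  rw [Real.rpow_neg ht.le, Real.rpow_add_one ht.ne']
  field_simp
end
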